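/- If H is a Hopf algebra with antipode S, then the coalgebra H together with the ternary operation [a,b,c] = aS(b)c is a Hopf heap, and its Grunspan map is S∘S. -/

import Mathlib

open Coalgebra TensorProduct

universe u v

/-- A Hopf heap: a coalgebra `C` together with a coalgebra map
`χ : C ⊗ C^co ⊗ C → C` (given here as a trilinear map) satisfying the heap axioms. -/
structure HopfHeap (F : Type u) (C : Type v) [Field F] [AddCommGroup C] [Module F C]
    [Coalgebra F C] where
  χ : C →ₗ[F] C →ₗ[F] C →ₗ[F] C
  counit_χ : ∀ a b c : C,
    counit (R := F) (χ a b c) = counit (R := F) a * counit (R := F) b * counit (R := F) c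
  comul_χ : ∀ (a b c : C) {ιa ιb ιc : Type v} (ra : Coalgebra.Repr.{u, v, v} F a ιa)
      (rb : Coalgebra.Repr.{u, v, v} F b ιb) (rc : Coalgebra.Repr.{u, v, v} F c ιc),
    comul (R := F) (χ a b c) =
      ∑ i ∈ ra.index, ∑ j ∈ rb.index, ∑ k ∈ rc.index,
        χ (ra.left i) (rb.right j) (rc.left k) ⊗ₜ[F] χ (ra.right i) (rb.left j) (rc.right k)
  assoc : ∀ a b c d e : C, χ (χ a b c) d e = χ a b (χ c d e)
  heap_left : ∀ (c a : C) {ι : Type v} (rc : Coalgebra.Repr.{u, v, v} F c ι),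
    ∑ i ∈ rc.index, χ (rc.left i) (rc.right i) a = counit (R := F) c • a
  heap_right : ∀ (c a : C) {ι : Type v} (rc : Coalgebra.Repr.{u, v, v} F c ι),
    ∑ i ∈ rc.index, χ a (rc.left i) (rc.right i) = counit (R := F) c • a

/-- `θ` is a Grunspan map for the Hopf heap `hh`: a coalgebra endomorphism satisfying
`[[a,b,θ c],d,e] = [a,[d,c,b],e]`. -/
def HopfHeap.IsGrunspan {F : Type u} {C : Type v} [Field F] [AddCommGroup C] [Module F C]
    [Coalgebra F C] (hh : HopfHeap F C) (θ : C →ₗ[F] C) : Prop :=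
  (∀ c : C, counit (R := F) (θ c) = counit (R := F) c) ∧
  (∀ (c : C) {ι : Type v} (rc : Coalgebra.Repr.{u, v, v} F c ι),
    comul (R := F) (θ c) = ∑ i ∈ rc.index, θ (rc.left i) ⊗ₜ[F] θ (rc.right i)) ∧
  (∀ a b c d e : C, hh.χ (hh.χ a b (θ c)) d e = hh.χ a (hh.χ d c b) e)


/-! The heap axioms other than comultiplicativity of `χ` are the antipode identities
`∑ S(c₁) c₂ = ε(c) = ∑ c₁ S(c₂)` and associativity. Comultiplicativity of `χ`, and of `S ∘ S`,
come from `S` being an anti-coalgebra map, `Δ (S x) = ∑ S x₂ ⊗ S x₁`; the Grunspan identity is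
`S (d S(c) b) = S(b) S²(c) S(d)`. -/

open WithConv

namespace HopfAlgebra

variable {R H : Type*} [CommSemiring R] [Semiring H] [HopfAlgebra R H]

lemma algHom_comp_antipode_convMul {A : Type*} [Semiring A] [Algebra R A] (φ : H →ₐ[R] A) :
    toConv (φ.toLinearMap ∘ₗ antipode R) * toConv φ.toLinearMap = 1 := by
  ext x
  simp [(ℛ R x).convMul_apply, ← map_mul, ← map_sum, sum_antipode_mul_eq_algebraMap_counit]

local notation "ι₁" =>
  AlgHom.toLinearMap (Algebra.TensorProduct.includeLeft (R := R) (S := R) (A := H) (B := H))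
local notation "ι₂" =>
  AlgHom.toLinearMap (Algebra.TensorProduct.includeRight (R := R) (A := H) (B := H))

lemma comul_eq_includeLeft_convMul_includeRight :
    toConv (comul (R := R) (A := H)) = toConv ι₁ * toConv ι₂ := by
  ext x
  simp [(ℛ R x).convMul_apply, ← (ℛ R x).eq]

/-- Writing `δ = ι₁ * ι₂` as a convolution product of the two algebra embeddings
`H → H ⊗ H` inverts it as `(ι₂ ∘ S) * (ι₁ ∘ S)`, which is `x ↦ ∑ S x₂ ⊗ S x₁`; this agrees with
the right inverse `δ ∘ S` of `δ`. -/
lemma comul_antipode {a : H} {ι : Type*} (r : Coalgebra.Repr R a ι) :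
    comul (R := R) (antipode R a) =
      ∑ i ∈ r.index, antipode R (r.right i) ⊗ₜ antipode R (r.left i) := by
  have left_inv :
      toConv (ι₂ ∘ₗ antipode R) * toConv (ι₁ ∘ₗ antipode R) * toConv (comul (R := R) (A := H))
        = 1 := by
    rw [comul_eq_includeLeft_convMul_includeRight, mul_assoc, ← mul_assoc (toConv (ι₁ ∘ₗ _)),
      algHom_comp_antipode_convMul, one_mul, algHom_comp_antipode_convMul]
  have h := left_inv_eq_right_inv (M := WithConv (H →ₗ[R] H ⊗[R] H)) left_inv
    LinearMap.comul_right_inv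
  simpa [r.convMul_apply] using (DFunLike.congr_fun (congrArg ofConv h) a).symm

noncomputable def _root_.Coalgebra.Repr.antipode {a : H} {ι : Type*}
    (r : Coalgebra.Repr R a ι) : Coalgebra.Repr R (antipode R a) ι where
  index := r.index
  left i := HopfAlgebra.antipode R (r.right i)
  right i := HopfAlgebra.antipode R (r.left i)
  eq := (comul_antipode r).symm

lemma comul_antipode_antipode {a : H} {ι : Type*} (r : Coalgebra.Repr R a ι) :
    comul (R := R) (antipode R (antipode R a)) =
      ∑ i ∈ r.index,
        antipode R (antipode R (r.left i)) ⊗ₜ antipode R (antipode R (r.right i)) := by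
  rw [comul_antipode r.antipode]
  rfl

lemma counit_mul_antipode_mul (a b c : H) :
    counit (R := R) (a * antipode R b * c) =
      counit (R := R) a * counit (R := R) b * counit (R := R) c := by
  simp only [Bialgebra.counit_mul, counit_antipode]

lemma comul_mul_antipode_mul {a b c : H} {ιa ιb ιc : Type*} (ra : Coalgebra.Repr R a ιa)
    (rb : Coalgebra.Repr R b ιb) (rc : Coalgebra.Repr R c ιc) :
    comul (R := R) (a * antipode R b * c) =
      ∑ i ∈ ra.index, ∑ j ∈ rb.index, ∑ k ∈ rc.index,
        (ra.left i * antipode R (rb.right j) * rc.left k) ⊗ₜ[R]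
          (ra.right i * antipode R (rb.left j) * rc.right k) := by
  rw [Bialgebra.comul_mul, Bialgebra.comul_mul, comul_antipode rb, ← ra.eq, ← rc.eq,
    Finset.sum_mul_sum]
  simp only [Finset.sum_mul]
  simp only [Finset.mul_sum, Algebra.TensorProduct.tmul_mul_tmul]

lemma sum_mul_antipode_mul_eq_smul (c a : H) {ι : Type*} (r : Coalgebra.Repr R c ι) :
    ∑ i ∈ r.index, r.left i * antipode R (r.right i) * a = counit (R := R) c • a := by
  rw [← Finset.sum_mul, sum_mul_antipode_eq_smul r, smul_one_mul]

lemma sum_mul_antipode_mul_eq_smul' (c a : H) {ι : Type*} (r : Coalgebra.Repr R c ι) :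
    ∑ i ∈ r.index, a * antipode R (r.left i) * r.right i = counit (R := R) c • a := by
  simp only [mul_assoc, ← Finset.mul_sum, sum_antipode_mul_eq_smul r, mul_smul_one]

/-- `[a, b, c] = a S(b) c`. -/
noncomputable def toHopfHeap (F H : Type*) [Field F] [Ring H] [HopfAlgebra F H] :
    HopfHeap F H where
  χ := ((LinearMap.mul F H).compl₂ (antipode F)).compr₂ (LinearMap.mul F H)
  counit_χ := counit_mul_antipode_mul
  comul_χ _ _ _ _ _ _ := comul_mul_antipode_mul
  assoc a b c d e := by simp only [LinearMap.compr₂_apply, LinearMap.compl₂_apply,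
    LinearMap.mul_apply', mul_assoc]
  heap_left c a _ := sum_mul_antipode_mul_eq_smul c a
  heap_right c a _ := sum_mul_antipode_mul_eq_smul' c a

end HopfAlgebra

/-- A Hopf algebra `H` with antipode `S` is a Hopf heap via `[a,b,c] = a S(b) c`,
with Grunspan map `S ∘ S`. -/
theorem hopfAlgebra_toHopfHeap (F : Type u) (H : Type v) [Field F] [Ring H]
    [HopfAlgebra F H] :
    ∃ hh : HopfHeap F H,
      (∀ a b c : H, hh.χ a b c = a * HopfAlgebra.antipode (R := F) b * c) ∧
      hh.IsGrunspan ((HopfAlgebra.antipode (R := F)).comp (HopfAlgebra.antipode (R := F))) := by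
  have hχ : ∀ a b c : H,
      (HopfAlgebra.toHopfHeap F H).χ a b c = a * HopfAlgebra.antipode F b * c :=
    fun _ _ _ ↦ rfl
  refine ⟨HopfAlgebra.toHopfHeap F H, hχ, fun c ↦ ?_,
    fun c _ r ↦ HopfAlgebra.comul_antipode_antipode r, fun a b c d e ↦ ?_⟩
  · simp only [LinearMap.comp_apply, HopfAlgebra.counit_antipode]
  · simp only [hχ, LinearMap.comp_apply, HopfAlgebra.antipode_mul_antidistrib, mul_assoc]
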